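/- Let S, L ∈ ℝ^{m×n} with Supp(S* − S) ⊆ Supp(S*), set E = S* − S, G = Σ_{i=1}^n Q_i Q_iᵀ(L − L*)e_i e_iᵀ, F = Σ_{i=1}^n Q_i Q_iᵀ(S − S*)e_i e_iᵀ, M = F + G + E, s = ‖E‖_{ℓ∞}, and l = max_i ‖G e_i‖_{ℓ2}. Then for every u ∈ ℝ^m: ‖Mᵀ u‖_{ℓ∞} ≤ [ ν√(d/m)·l + α₁(1 + ν²d)·s ]·m·‖u‖_{ℓ∞}. -/

import Mathlib

/-!
Fix a column `j` and write `P = Q_j Q_jᵀ`, `a = Q_jᵀ u`, `g` and `e` for the `j`-th columns of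
`L - L*` and `E`. The `j`-th column of `M` is `P g - P e + e`, so `(Mᵀ u)_j` splits into three
terms. Since `Q_j` has orthonormal columns, `u ⬝ P g = a ⬝ Q_jᵀ g` and `‖Q_jᵀ g‖ = ‖G e_j‖ ≤ l`,
while `‖a‖ ≤ Σ_i |u_i| ‖Q_jᵀ e_i‖ ≤ m ν √(d/m) ‖u‖_∞` by incoherence. The other two terms are sums
over the support of `e`, which lies in that of the `j`-th column of `S*` and so has at most `α₁ m`
entries, each bounded by `s ‖u‖_∞` resp. `s ‖a‖ ν √(d/m)`; finally `m (ν √(d/m))² = ν² d`.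
-/

open Matrix
open scoped BigOperators

noncomputable def l2 {n : ℕ} (v : Fin n → ℝ) : ℝ := Real.sqrt (∑ i, v i ^ 2)

noncomputable def vinf {n : ℕ} (v : Fin n → ℝ) : ℝ := ⨆ i, |v i|

noncomputable def linf {m n : ℕ} (X : Matrix (Fin m) (Fin n) ℝ) : ℝ := ⨆ i, ⨆ j, |X i j|

noncomputable def frob {m n : ℕ} (X : Matrix (Fin m) (Fin n) ℝ) : ℝ :=
  Real.sqrt (∑ i, ∑ j, X i j ^ 2)

noncomputable def spec {m n : ℕ} (X : Matrix (Fin m) (Fin n) ℝ) : ℝ :=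
  ‖LinearMap.toContinuousLinearMap (Matrix.toEuclideanLin X)‖

def supp {m n : ℕ} (X : Matrix (Fin m) (Fin n) ℝ) : Set (Fin m × Fin n) :=
  {p | X p.1 p.2 ≠ 0}

noncomputable def sthr {m n : ℕ} (ζ : ℝ) (X : Matrix (Fin m) (Fin n) ℝ) :
    Matrix (Fin m) (Fin n) ℝ :=
  Matrix.of fun i j => Real.sign (X i j) * max (|X i j| - ζ) 0

section EuclideanNorm

variable {k : ℕ}

lemma l2_eq_norm (v : Fin k → ℝ) : l2 v = ‖WithLp.toLp 2 v‖ := by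
  simp [EuclideanSpace.norm_eq, l2, sq_abs]

lemma l2_nonneg (v : Fin k → ℝ) : 0 ≤ l2 v := Real.sqrt_nonneg _

lemma abs_dotProduct_le_l2_mul_l2 (a b : Fin k → ℝ) : |a ⬝ᵥ b| ≤ l2 a * l2 b := by
  simpa [l2_eq_norm, EuclideanSpace.inner_toLp_toLp, dotProduct_comm] using
    abs_real_inner_le_norm (WithLp.toLp 2 a) (WithLp.toLp 2 b)

lemma l2_mulVec_le_sum {m : ℕ} (A : Matrix (Fin k) (Fin m) ℝ) (u : Fin m → ℝ) :
    l2 (A *ᵥ u) ≤ ∑ i, |u i| * l2 (A *ᵥ Pi.single i 1) := by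
  have hu : A *ᵥ u = ∑ i, u i • A *ᵥ Pi.single i 1 := by
    ext p
    simp [mulVec, dotProduct, Finset.sum_apply, mul_comm]
  simpa [l2_eq_norm, hu, norm_smul] using
    norm_sum_le Finset.univ fun i => WithLp.toLp 2 (u i • A *ᵥ Pi.single i (1 : ℝ))

lemma l2_mulVec_le {m : ℕ} (A : Matrix (Fin k) (Fin m) ℝ) {u : Fin m → ℝ} {B c : ℝ}
    (hu : ∀ i, |u i| ≤ B) (hA : ∀ i, l2 (A *ᵥ Pi.single i 1) ≤ c) :
    l2 (A *ᵥ u) ≤ m * (c * B) := by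
  calc l2 (A *ᵥ u) ≤ ∑ i, |u i| * l2 (A *ᵥ Pi.single i 1) := l2_mulVec_le_sum A u
    _ ≤ ∑ _i : Fin m, B * c :=
      Finset.sum_le_sum fun i _ =>
        mul_le_mul (hu i) (hA i) (l2_nonneg _) ((abs_nonneg _).trans (hu i))
    _ = m * (c * B) := by simp [mul_comm]

lemma l2_mulVec_of_transpose_mul_self {m : ℕ} {Q : Matrix (Fin m) (Fin k) ℝ}
    (hQ : Qᵀ * Q = 1) (x : Fin k → ℝ) : l2 (Q *ᵥ x) = l2 x := by
  have hdot : ∀ {n : ℕ} (v : Fin n → ℝ), ∑ i, v i ^ 2 = v ⬝ᵥ v := fun v => by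
    simp [dotProduct, sq]
  rw [l2, l2, hdot, hdot, dotProduct_mulVec, ← mulVec_transpose, mulVec_mulVec, hQ,
    one_mulVec]

end EuclideanNorm

lemma dotProduct_mul_transpose_mulVec {m k : ℕ} (Q : Matrix (Fin m) (Fin k) ℝ)
    (u x : Fin m → ℝ) : u ⬝ᵥ ((Q * Qᵀ) *ᵥ x) = (Qᵀ *ᵥ u) ⬝ᵥ (Qᵀ *ᵥ x) := by
  rw [← mulVec_mulVec, dotProduct_mulVec, mulVec_transpose Q u]

lemma abs_sum_mul_le_card_mul {ι : Type*} [Fintype ι] (T : Finset ι) {e f : ι → ℝ} {s K : ℝ}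
    (heT : ∀ i ∉ T, e i = 0) (he : ∀ i, |e i| ≤ s) (hf : ∀ i, |f i| ≤ K) :
    |∑ i, e i * f i| ≤ T.card * (s * K) := by
  calc |∑ i, e i * f i| = |∑ i ∈ T, e i * f i| := by
        rw [Finset.sum_subset (Finset.subset_univ T) fun i _ hi => by simp [heT i hi]]
    _ ≤ ∑ i ∈ T, |e i * f i| := Finset.abs_sum_le_sum_abs _ _
    _ ≤ ∑ _i ∈ T, s * K := Finset.sum_le_sum fun i _ => by
        rw [abs_mul]
        exact mul_le_mul (he i) (hf i) (abs_nonneg _) ((abs_nonneg _).trans (he i))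
    _ = T.card * (s * K) := by simp

lemma abs_le_vinf {k : ℕ} (v : Fin k → ℝ) (i : Fin k) : |v i| ≤ vinf v :=
  le_ciSup (f := fun i => |v i|) (Finite.bddAbove_range _) i

lemma vinf_nonneg {k : ℕ} (v : Fin k → ℝ) : 0 ≤ vinf v :=
  Real.iSup_nonneg fun _ => abs_nonneg _

lemma abs_le_linf {m n : ℕ} (X : Matrix (Fin m) (Fin n) ℝ) (i : Fin m) (j : Fin n) :
    |X i j| ≤ linf X :=
  (le_ciSup (f := fun j => |X i j|) (Finite.bddAbove_range _) j).trans
    (le_ciSup (f := fun i => ⨆ j, |X i j|) (Finite.bddAbove_range _) i)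

lemma linf_nonneg {m n : ℕ} (X : Matrix (Fin m) (Fin n) ℝ) : 0 ≤ linf X :=
  Real.iSup_nonneg fun _ => Real.iSup_nonneg fun _ => abs_nonneg _

lemma sum_vecMulVec_single_col {m n : ℕ} (w : Fin n → Fin m → ℝ) (j : Fin n) :
    (fun i => (∑ k, vecMulVec (w k) (Pi.single k (1 : ℝ))) i j) = w j := by
  ext i
  simp [Matrix.sum_apply, vecMulVec_apply, Pi.single_apply]

lemma sub_apply_eq_zero_of_supp_sub_subset {m n : ℕ} {A B : Matrix (Fin m) (Fin n) ℝ}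
    (h : supp (A - B) ⊆ supp A) {i : Fin m} {j : Fin n} (hA : A i j = 0) : (A - B) i j = 0 :=
  not_not.mp fun hAB => h (show (i, j) ∈ supp (A - B) from hAB) hA

section Projection

variable {m k : ℕ} {Q : Matrix (Fin m) (Fin k) ℝ} {u e : Fin m → ℝ} {B c s : ℝ}

lemma abs_dotProduct_proj_le (hQ : Qᵀ * Q = 1) (u g : Fin m → ℝ) :
    |u ⬝ᵥ ((Q * Qᵀ) *ᵥ g)| ≤ l2 (Qᵀ *ᵥ u) * l2 ((Q * Qᵀ) *ᵥ g) := by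
  rw [dotProduct_mul_transpose_mulVec, ← mulVec_mulVec, l2_mulVec_of_transpose_mul_self hQ]
  exact abs_dotProduct_le_l2_mul_l2 _ _

lemma abs_dotProduct_proj_le_card_mul (T : Finset (Fin m)) {A : ℝ}
    (hQe : ∀ p, l2 (Qᵀ *ᵥ Pi.single p 1) ≤ c) (hu : l2 (Qᵀ *ᵥ u) ≤ A)
    (heT : ∀ i ∉ T, e i = 0) (he : ∀ i, |e i| ≤ s) :
    |u ⬝ᵥ ((Q * Qᵀ) *ᵥ e)| ≤ T.card * (s * (A * c)) := by
  rw [dotProduct_mul_transpose_mulVec, dotProduct_mulVec, dotProduct_comm]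
  refine abs_sum_mul_le_card_mul T heT he fun i => ?_
  calc |((Qᵀ *ᵥ u) ᵥ* Qᵀ) i| = |(Qᵀ *ᵥ u) ⬝ᵥ (Qᵀ *ᵥ Pi.single i 1)| := by
        rw [dotProduct_mulVec, dotProduct_single_one]
    _ ≤ l2 (Qᵀ *ᵥ u) * l2 (Qᵀ *ᵥ Pi.single i 1) := abs_dotProduct_le_l2_mul_l2 _ _
    _ ≤ A * c := mul_le_mul hu (hQe i) (l2_nonneg _) ((l2_nonneg _).trans hu)

lemma abs_dotProduct_proj_sub_add_le (hQ : Qᵀ * Q = 1)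
    (hQe : ∀ p, l2 (Qᵀ *ᵥ Pi.single p 1) ≤ c) (hu : ∀ i, |u i| ≤ B)
    (T : Finset (Fin m)) (heT : ∀ i ∉ T, e i = 0) (he : ∀ i, |e i| ≤ s) (g : Fin m → ℝ) :
    |u ⬝ᵥ ((Q * Qᵀ) *ᵥ g - (Q * Qᵀ) *ᵥ e + e)| ≤
      m * (c * B) * l2 ((Q * Qᵀ) *ᵥ g) + T.card * (m * c ^ 2 + 1) * s * B := by
  have hQu : l2 (Qᵀ *ᵥ u) ≤ m * (c * B) := l2_mulVec_le Qᵀ hu hQe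
  have hG : |u ⬝ᵥ ((Q * Qᵀ) *ᵥ g)| ≤ m * (c * B) * l2 ((Q * Qᵀ) *ᵥ g) :=
    (abs_dotProduct_proj_le hQ u g).trans (mul_le_mul_of_nonneg_right hQu (l2_nonneg _))
  have hF : |u ⬝ᵥ ((Q * Qᵀ) *ᵥ e)| ≤ T.card * (s * (m * (c * B) * c)) :=
    abs_dotProduct_proj_le_card_mul T hQe hQu heT he
  have hE : |u ⬝ᵥ e| ≤ T.card * (s * B) := by
    rw [dotProduct_comm]
    exact abs_sum_mul_le_card_mul T heT he hu
  calc |u ⬝ᵥ ((Q * Qᵀ) *ᵥ g - (Q * Qᵀ) *ᵥ e + e)|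
        ≤ |u ⬝ᵥ ((Q * Qᵀ) *ᵥ g)| + |u ⬝ᵥ ((Q * Qᵀ) *ᵥ e)| + |u ⬝ᵥ e| := by
          rw [dotProduct_add, dotProduct_sub]
          exact (abs_add_le _ _).trans (add_le_add_left (abs_sub _ _) _)
    _ ≤ m * (c * B) * l2 ((Q * Qᵀ) *ᵥ g) + T.card * (s * (m * (c * B) * c))
          + T.card * (s * B) := add_le_add (add_le_add hG hF) hE
    _ = m * (c * B) * l2 ((Q * Qᵀ) *ᵥ g) + T.card * (m * c ^ 2 + 1) * s * B := by ring

end Projection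

theorem stmt4_general (m n d : ℕ) (hm : 0 < m) (hn : 0 < n)
    (ν α₁ : ℝ) (hν : 0 < ν)
    (Q : Fin n → Matrix (Fin m) (Fin d) ℝ)
    (hQortho : ∀ i, (Q i)ᵀ * Q i = 1)
    (hQe : ∀ (p : Fin m) (j : Fin n),
      l2 ((Q j)ᵀ *ᵥ Pi.single p 1) ≤ ν * Real.sqrt ((d : ℝ) / m))
    (Lstar Sstar S L : Matrix (Fin m) (Fin n) ℝ)
    (hScol : ∀ j : Fin n,
      ((Finset.univ.filter fun i => Sstar i j ≠ 0).card : ℝ) ≤ α₁ * m)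
    (hsupp : supp (Sstar - S) ⊆ supp Sstar)
    (E G F Mm : Matrix (Fin m) (Fin n) ℝ) (s l : ℝ)
    (hE : E = Sstar - S)
    (hG : G = ∑ i, Matrix.vecMulVec
        ((Q i * (Q i)ᵀ) *ᵥ fun p => (L - Lstar) p i) (Pi.single i 1))
    (hF : F = ∑ i, Matrix.vecMulVec
        ((Q i * (Q i)ᵀ) *ᵥ fun p => (S - Sstar) p i) (Pi.single i 1))
    (hM : Mm = F + G + E)
    (hs : s = linf E)
    (hl : l = ⨆ i, l2 fun p => G p i) :
    ∀ u : Fin m → ℝ,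
      vinf (Mmᵀ *ᵥ u) ≤
        (ν * Real.sqrt ((d : ℝ) / m) * l + α₁ * (1 + ν ^ 2 * d) * s) * m * vinf u := by
  intro u
  have : Nonempty (Fin n) := ⟨⟨0, hn⟩⟩
  set c := ν * Real.sqrt ((d : ℝ) / m)
  have hmc : (m : ℝ) * c ^ 2 = ν ^ 2 * d := by
    rw [mul_pow, Real.sq_sqrt (by positivity)]
    field_simp
  have hs0 : 0 ≤ s := hs ▸ linf_nonneg E
  refine ciSup_le fun j => ?_
  set g : Fin m → ℝ := fun p => (L - Lstar) p j
  set e : Fin m → ℝ := fun p => E p j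
  have hGj : (fun p => G p j) = (Q j * (Q j)ᵀ) *ᵥ g := hG ▸ sum_vecMulVec_single_col _ j
  have hFj : (fun p => F p j) = (Q j * (Q j)ᵀ) *ᵥ -e := by
    rw [hF, sum_vecMulVec_single_col]
    congr 1
    ext p
    simp [e, hE]
  have hcol : (Mmᵀ *ᵥ u) j = u ⬝ᵥ ((Q j * (Q j)ᵀ) *ᵥ g - (Q j * (Q j)ᵀ) *ᵥ e + e) := by
    rw [mulVec_transpose, sub_eq_neg_add, ← mulVec_neg, ← hFj, ← hGj, hM]
    rfl
  have heT : ∀ i ∉ Finset.univ.filter fun i => Sstar i j ≠ 0, e i = 0 :=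
    fun i hi => by
      simpa [e, hE] using sub_apply_eq_zero_of_supp_sub_subset hsupp (by simpa using hi)
  have hGl : l2 ((Q j * (Q j)ᵀ) *ᵥ g) ≤ l := by
    rw [hl, ← hGj]
    exact le_ciSup (f := fun i => l2 fun p => G p i) (Finite.bddAbove_range _) j
  calc |(Mmᵀ *ᵥ u) j|
      ≤ m * (c * vinf u) * l2 ((Q j * (Q j)ᵀ) *ᵥ g)
          + (Finset.univ.filter fun i => Sstar i j ≠ 0).card * (m * c ^ 2 + 1) * s * vinf u :=
        hcol ▸ abs_dotProduct_proj_sub_add_le (hQortho j) (hQe · j) (abs_le_vinf u) _ heT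
          (fun i => hs ▸ abs_le_linf E i j) g
    _ ≤ m * (c * vinf u) * l + α₁ * m * (m * c ^ 2 + 1) * s * vinf u := by
        have := vinf_nonneg u
        gcongr
        exact hScol j
    _ = (c * l + α₁ * (1 + ν ^ 2 * d) * s) * m * vinf u := by
        rw [hmc]; ring

/-- Lemma 4 of the paper: bound on `‖Mᵀu‖_{ℓ∞}`. -/
theorem stmt4 (m n d : ℕ) (hm : 0 < m) (hn : 0 < n) (hd : 0 < d)
    (ν α₁ : ℝ) (hν : 0 < ν) (hα₁ : 0 < α₁)
    (Q : Fin n → Matrix (Fin m) (Fin d) ℝ)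
    (hQortho : ∀ i, (Q i)ᵀ * Q i = 1)
    (hQe : ∀ (p : Fin m) (j : Fin n),
      l2 ((Q j)ᵀ *ᵥ Pi.single p 1) ≤ ν * Real.sqrt ((d : ℝ) / m))
    (Lstar Sstar S L : Matrix (Fin m) (Fin n) ℝ)
    (hScol : ∀ j : Fin n,
      ((Finset.univ.filter fun i => Sstar i j ≠ 0).card : ℝ) ≤ α₁ * m)
    (hsupp : supp (Sstar - S) ⊆ supp Sstar)
    (E G F Mm : Matrix (Fin m) (Fin n) ℝ) (s l : ℝ)
    (hE : E = Sstar - S)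
    (hG : G = ∑ i, Matrix.vecMulVec
        ((Q i * (Q i)ᵀ) *ᵥ fun p => (L - Lstar) p i) (Pi.single i 1))
    (hF : F = ∑ i, Matrix.vecMulVec
        ((Q i * (Q i)ᵀ) *ᵥ fun p => (S - Sstar) p i) (Pi.single i 1))
    (hM : Mm = F + G + E)
    (hs : s = linf E)
    (hl : l = ⨆ i, l2 fun p => G p i) :
    ∀ u : Fin m → ℝ,
      vinf (Mmᵀ *ᵥ u) ≤
        (ν * Real.sqrt ((d : ℝ) / m) * l + α₁ * (1 + ν ^ 2 * d) * s) * m * vinf u :=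
  stmt4_general m n d hm hn ν α₁ hν Q hQortho hQe Lstar Sstar S L hScol hsupp E G F Mm s l hE hG hF
    hM hs hl
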